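/- Let x be a C¹ solution of the first-order singular Cucker–Smale system with strictly increasing natural velocities ν_1 < ν_2 < … < ν_N. Then the position diameter D_x(t) = max_i x_i(t) − min_i x_i(t) satisfies D_x(t) ≤ C'_{M1} for all t ≥ 0, where C'_{M1} = max{ D_x(0), ((1−β)(ν_N − ν_1)/κ)^{1/(1−β)} }. -/

import Mathlib

/-!
If the diameter ever exceeded the bound `M` by `ε > 0`, the first such time is realised by a pair
`(i, j)` with `i` rightmost and `j` leftmost. Subadditivity of `r ↦ r ^ (1 - β)` makes every
agent pull `i` and `j` together, so `(x_i - x_j)' ≤ (ν_N - ν_1) - κ Ψ(x_i - x_j)`, which is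
negative once `x_i - x_j` exceeds `Ψ⁻¹((ν_N - ν_1) / κ)`; hence the diameter cannot cross `M + ε`.
-/

open Real Filter Set

/-- The interaction function `Ψ(x) = sign(x)·|x|^{1−β}/(1−β)`. -/
noncomputable def psiCS (β y : ℝ) : ℝ := Real.sign y * |y| ^ (1 - β) / (1 - β)

/-- A C¹ solution on `[0,∞)` of the first-order singular Cucker–Smale system:
`x_i'(t) = ν_i + (κ/N) Σ_k Ψ(x_k(t) − x_i(t))`. -/
def IsCSSol (N : ℕ) (β κ : ℝ) (ν : Fin N → ℝ) (x : ℝ → Fin N → ℝ) : Prop :=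
  (∀ i, ContDiffOn ℝ 1 (fun t => x t i) (Set.Ici 0)) ∧
  ∀ i, ∀ t ≥ (0:ℝ), HasDerivWithinAt (fun s => x s i)
    (ν i + (κ / (N:ℝ)) * ∑ k, psiCS β (x t k - x t i)) (Set.Ici 0) t

/-- The diameter of a configuration `y : Fin N → ℝ`. -/
noncomputable def diam {N : ℕ} (y : Fin N → ℝ) : ℝ := ⨆ i, ⨆ j, (y i - y j)

open Topology

lemma psiCS_of_nonneg {β y : ℝ} (hβ1 : β < 1) (hy : 0 ≤ y) :
    psiCS β y = y ^ (1 - β) / (1 - β) := by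
  rcases hy.eq_or_lt with rfl | hy
  · simp [psiCS, Real.zero_rpow (by linarith : (1:ℝ) - β ≠ 0)]
  · simp [psiCS, Real.sign_of_pos hy, abs_of_pos hy]

lemma psiCS_neg (β y : ℝ) : psiCS β (-y) = -psiCS β y := by
  simp only [psiCS, Real.sign_neg, abs_neg]
  ring

lemma psiCS_add_le {β a b : ℝ} (hβ0 : 0 ≤ β) (hβ1 : β < 1) (ha : 0 ≤ a) (hb : 0 ≤ b) :
    psiCS β (a + b) ≤ psiCS β a + psiCS β b := by
  rw [psiCS_of_nonneg hβ1 ha, psiCS_of_nonneg hβ1 hb, psiCS_of_nonneg hβ1 (add_nonneg ha hb),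
    ← add_div]
  gcongr
  exact Real.rpow_add_le_add_rpow ha hb (by linarith) (by linarith)

lemma psiCS_strictMonoOn {β : ℝ} (hβ1 : β < 1) : StrictMonoOn (psiCS β) (Ici 0) := by
  intro a ha b hb hab
  rw [psiCS_of_nonneg hβ1 ha, psiCS_of_nonneg hβ1 hb]
  have : 0 < 1 - β := by linarith
  gcongr

lemma psiCS_rpow_inv {β y : ℝ} (hβ1 : β < 1) (hy : 0 ≤ y) :
    psiCS β (((1 - β) * y) ^ (1 / (1 - β))) = y := by
  have hβ : 0 < 1 - β := by linarith
  rw [psiCS_of_nonneg hβ1 (by positivity), one_div,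
    Real.rpow_inv_rpow (by positivity) hβ.ne']
  field_simp

noncomputable def csVelocity (N : ℕ) (β κ : ℝ) (ν y : Fin N → ℝ) (i : Fin N) : ℝ :=
  ν i + (κ / N) * ∑ k, psiCS β (y k - y i)

lemma csVelocity_sub_le {N : ℕ} {β κ : ℝ} (hβ0 : 0 ≤ β) (hβ1 : β < 1) (hκ : 0 ≤ κ)
    (ν y : Fin N → ℝ) {i j : Fin N} (hi : ∀ k, y k ≤ y i) (hj : ∀ k, y j ≤ y k) :
    csVelocity N β κ ν y i - csVelocity N β κ ν y j ≤ ν i - ν j - κ * psiCS β (y i - y j) := by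
  have hN : (N : ℝ) ≠ 0 := Nat.cast_ne_zero.2 (Fin.pos i).ne'
  have hterm : ∀ k, psiCS β (y k - y i) - psiCS β (y k - y j) ≤ -psiCS β (y i - y j) := by
    intro k
    have h := psiCS_add_le hβ0 hβ1 (sub_nonneg.2 (hi k)) (sub_nonneg.2 (hj k))
    rw [show y i - y k + (y k - y j) = y i - y j by ring, ← neg_sub (y k) (y i),
      psiCS_neg] at h
    linarith
  have hsum : ∑ k, psiCS β (y k - y i) - ∑ k, psiCS β (y k - y j) ≤ N * -psiCS β (y i - y j) := by
    rw [← Finset.sum_sub_distrib]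
    simpa using Finset.sum_le_sum fun k (_ : k ∈ Finset.univ) => hterm k
  calc csVelocity N β κ ν y i - csVelocity N β κ ν y j
      = ν i - ν j + κ / N * (∑ k, psiCS β (y k - y i) - ∑ k, psiCS β (y k - y j)) := by
        unfold csVelocity; ring
    _ ≤ ν i - ν j + κ / N * (N * -psiCS β (y i - y j)) := by gcongr
    _ = ν i - ν j - κ * psiCS β (y i - y j) := by field_simp; ring

lemma eventually_nhdsGT_lt_of_hasDerivWithinAt_neg {f : ℝ → ℝ} {f' t : ℝ}
    (hf : HasDerivWithinAt f f' (Ici t) t) (hf' : f' < 0) : ∀ᶠ s in 𝓝[>] t, f s < f t := by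
  filter_upwards [hf.Ioi_of_Ici.limsup_slope_le' (lt_irrefl t) hf', self_mem_nhdsWithin]
    with s hs hts
  exact (slope_neg_iff_of_le (le_of_lt hts)).1 hs

lemma forall_le_of_eventually_le_of_eq {ι : Type*} [Finite ι] {g : ι → ℝ → ℝ} {a M : ℝ}
    (hg : ∀ i, ContinuousOn (g i) (Ici a)) (ha : ∀ i, g i a ≤ M)
    (hM : ∀ t ≥ a, (∀ i, g i t ≤ M) → ∀ i, g i t = M → ∀ᶠ s in 𝓝[>] t, g i s ≤ M) :
    ∀ t ≥ a, ∀ i, g i t ≤ M := by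
  intro b hb
  set S : Set ℝ := {t | ∀ i, g i t ≤ M}
  have hclosed : IsClosed (S ∩ Icc a b) := by
    have : S ∩ Icc a b = Icc a b ∩ ⋂ i, (Icc a b ∩ g i ⁻¹' Iic M) := by
      ext t
      simp only [S, mem_inter_iff, mem_iInter, mem_ofPred_eq, mem_preimage, mem_Iic]
      exact ⟨fun ⟨h, ht⟩ => ⟨ht, fun i => ⟨ht, h i⟩⟩, fun ⟨ht, h⟩ => ⟨fun i => (h i).2, ht⟩⟩
    rw [this]
    exact isClosed_Icc.inter (isClosed_iInter fun i =>
      ((hg i).mono Icc_subset_Ici_self).preimage_isClosed_of_isClosed isClosed_Icc isClosed_Iic)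
  refine hclosed.Icc_subset_of_forall_mem_nhdsWithin ha (fun t ⟨htS, htab⟩ => ?_) ⟨hb, le_rfl⟩
  refine Filter.eventually_all.2 fun i => ?_
  rcases (htS i).lt_or_eq with hlt | heq
  · have hcont : ContinuousWithinAt (g i) (Ioi t) t :=
      (hg i t htab.1).mono (Ioi_subset_Ici htab.1)
    exact hcont.eventually (Iic_mem_nhds hlt)
  · exact hM t htab.1 htS i heq

lemma IsCSSol.eventually_sub_lt_of_extreme {N : ℕ} {β κ : ℝ} {ν : Fin N → ℝ}
    {x : ℝ → Fin N → ℝ} (hx : IsCSSol N β κ ν x) (hβ0 : 0 ≤ β) (hβ1 : β < 1) (hκ : 0 ≤ κ)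
    {t : ℝ} (ht : 0 ≤ t) {i j : Fin N} (hi : ∀ k, x t k ≤ x t i) (hj : ∀ k, x t j ≤ x t k)
    (hpull : ν i - ν j < κ * psiCS β (x t i - x t j)) :
    ∀ᶠ s in 𝓝[>] t, x s i - x s j < x t i - x t j := by
  have hderiv : HasDerivWithinAt (fun s => x s i - x s j)
      (csVelocity N β κ ν (x t) i - csVelocity N β κ ν (x t) j) (Ici t) t :=
    ((hx.2 i t ht).sub (hx.2 j t ht)).mono (Ici_subset_Ici.2 ht)
  refine eventually_nhdsGT_lt_of_hasDerivWithinAt_neg hderiv ?_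
  linarith [csVelocity_sub_le hβ0 hβ1 hκ ν (x t) hi hj]

lemma le_diam {N : ℕ} (y : Fin N → ℝ) (i j : Fin N) : y i - y j ≤ diam y :=
  (le_ciSup (Finite.bddAbove_range _) j).trans
    (le_ciSup (f := fun i => ⨆ j, (y i - y j)) (Finite.bddAbove_range _) i)

lemma diam_le {N : ℕ} [NeZero N] {y : Fin N → ℝ} {M : ℝ} (h : ∀ i j, y i - y j ≤ M) :
    diam y ≤ M :=
  ciSup_le fun i => ciSup_le fun j => h i j

lemma IsCSSol.diam_le_of_lt_mul_psiCS {N : ℕ} [NeZero N] {β κ : ℝ} {ν : Fin N → ℝ}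
    {x : ℝ → Fin N → ℝ} (hx : IsCSSol N β κ ν x) (hβ0 : 0 ≤ β) (hβ1 : β < 1) (hκ : 0 ≤ κ) {M : ℝ}
    (h0 : diam (x 0) ≤ M) (hpull : ∀ i j D, M < D → ν i - ν j < κ * psiCS β D) :
    ∀ t ≥ (0:ℝ), diam (x t) ≤ M := by
  have hbound : ∀ ε > 0, ∀ t ≥ (0:ℝ), ∀ p : Fin N × Fin N, x t p.1 - x t p.2 ≤ M + ε := by
    intro ε hε
    refine forall_le_of_eventually_le_of_eq
      (fun p => ((hx.1 p.1).continuousOn.sub (hx.1 p.2).continuousOn))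
      (fun p => by linarith [le_diam (x 0) p.1 p.2]) ?_
    rintro s hs hle ⟨i, j⟩ heq
    have hi : ∀ k, x s k ≤ x s i := fun k => by linarith [hle (k, j)]
    have hj : ∀ k, x s j ≤ x s k := fun k => by linarith [hle (i, k)]
    filter_upwards [hx.eventually_sub_lt_of_extreme hβ0 hβ1 hκ hs hi hj
      (hpull i j _ (by linarith))] with s' hs'
    exact heq ▸ hs'.le
  intro t ht
  exact diam_le fun i j => le_of_forall_pos_le_add fun ε hε => hbound ε hε t ht (i, j)

lemma lt_mul_psiCS_of_rpow_lt {β κ C D : ℝ} (hβ1 : β < 1) (hκ : 0 < κ) (hC : 0 ≤ C)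
    (hD : ((1 - β) * C / κ) ^ (1 / (1 - β)) < D) : C < κ * psiCS β D := by
  have hCκ : 0 ≤ C / κ := div_nonneg hC hκ.le
  rw [mul_div_assoc] at hD
  have hR0 : 0 ≤ ((1 - β) * (C / κ)) ^ (1 / (1 - β)) :=
    Real.rpow_nonneg (mul_nonneg (by linarith) hCκ) _
  calc C = κ * psiCS β (((1 - β) * (C / κ)) ^ (1 / (1 - β))) := by
        rw [psiCS_rpow_inv hβ1 hCκ]; field_simp
    _ < κ * psiCS β D :=
        mul_lt_mul_of_pos_left (psiCS_strictMonoOn hβ1 hR0 (hR0.trans hD.le) hD) hκ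

/-- Uniform-in-time upper bound for the position diameter under strictly
increasing natural velocities. -/
theorem stmt6 (N : ℕ) (hN : 2 ≤ N) (β κ : ℝ) (hβ0 : 0 < β) (hβ1 : β < 1)
    (hκ : 0 < κ) (ν : Fin N → ℝ) (x : ℝ → Fin N → ℝ) (hx : IsCSSol N β κ ν x)
    (hν : StrictMono ν) :
    ∀ t ≥ (0:ℝ), diam (x t) ≤
      max (diam (x 0))
        (((1 - β) * (ν ⟨N - 1, by omega⟩ - ν ⟨0, by omega⟩) / κ) ^ (1 / (1 - β))) := by
  have : NeZero N := ⟨by omega⟩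
  have hνC : ∀ i j, ν i - ν j ≤ ν ⟨N - 1, by omega⟩ - ν ⟨0, by omega⟩ := fun i j => by
    have := hν.monotone (show i ≤ ⟨N - 1, by omega⟩ from Fin.mk_le_mk.2 (by omega))
    have := hν.monotone (show ⟨0, by omega⟩ ≤ j from Fin.mk_le_mk.2 (Nat.zero_le _))
    linarith
  exact hx.diam_le_of_lt_mul_psiCS hβ0.le hβ1 hκ.le (le_max_left _ _) fun i j D hD =>
    (hνC i j).trans_lt <| lt_mul_psiCS_of_rpow_lt hβ1 hκ (by simpa using hνC 0 0)
      ((le_max_right _ _).trans_lt hD)
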